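/- arXiv:1012.2040 — 2 statements merged into one kernel-verified Lean document; each statement's English description precedes it below -/
import Mathlib

section
/- Let κ be a regular uncountable cardinal and λ ≥ κ a cardinal. Then I_IT[κ,λ] is a normal ideal on P_κλ: it contains every nonstationary subset of P_κλ, is closed under subsets and finite unions, and whenever D ⊆ P_κλ and g : D → λ is regressive (meaning g(a) ∈ a for every nonempty a ∈ D) with g⁻¹{γ} ∈ I_IT[κ,λ] for every γ < λ, then D ∈ I_IT[κ,λ]. -/
open Cardinal Set

/-! Combinatorial framework: `P_κ λ`, clubs, stationarity, thin/slender lists,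
branches, the principles `TP`, `SP`, `ITP`, `ISP`, the ideals `I_IT`, `I_IS`,
ultrafilter notions, ordinal clubs, and square sequences. -/

/-- `P_κ λ`: the collection of subsets of (the set of ordinals below) `λ` of size `< κ`. -/
def Pk (κ lam : Cardinal.{0}) : Set (Set Ordinal.{0}) :=
  {a | (∀ α ∈ a, α < lam.ord) ∧ #a < Cardinal.lift.{1} κ}

/-- `C` is club in `P_κ X` (represented by `S`, a collection of subsets of `X`):
cofinal in `(S, ⊆)` and closed under unions of `⊆`-increasing chains of length `< κ`. -/
def IsClubIn {X : Type*} (κ : Cardinal.{0}) (S : Set (Set X)) (C : Set (Set X)) : Prop :=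
  C ⊆ S ∧ (∀ a ∈ S, ∃ c ∈ C, a ⊆ c) ∧
    ∀ δ : Ordinal.{0}, 0 < δ → δ.card < κ →
      ∀ f : Ordinal.{0} → Set X, (∀ β < δ, f β ∈ C) →
        (∀ β γ, β ≤ γ → γ < δ → f β ⊆ f γ) →
        (⋃ β ∈ Set.Iio δ, f β) ∈ C

/-- `T` is stationary in `P_κ X`: it meets every club. -/
def IsStatIn {X : Type*} (κ : Cardinal.{0}) (S T : Set (Set X)) : Prop :=
  T ⊆ S ∧ ∀ C, IsClubIn κ S C → (T ∩ C).Nonempty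

/-- A `P_κ λ`-list: `d a ⊆ a` for every `a ∈ P_κ λ`. -/
def IsList (κ lam : Cardinal) (d : Set Ordinal → Set Ordinal) : Prop :=
  ∀ a ∈ Pk κ lam, d a ⊆ a

/-- A thin `P_κ λ`-list: on a club of `c`'s, `|{d_a ∩ c : c ⊆ a ∈ P_κ λ}| < κ`. -/
def IsThin (κ lam : Cardinal) (d : Set Ordinal → Set Ordinal) : Prop :=
  ∃ C, IsClubIn κ (Pk κ lam) C ∧
    ∀ c ∈ C, #{x : Set Ordinal | ∃ a ∈ Pk κ lam, c ⊆ a ∧ x = d a ∩ c} < Cardinal.lift.{1} κ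

/-- `H_θ`: sets hereditarily of cardinality `< θ`. -/
def HSet (θ : Cardinal.{0}) : Set ZFSet.{0} :=
  {x | ZFSet.Hereditarily (fun y => #y.toSet < Cardinal.lift.{1} θ) x}

/-- `x` is the von Neumann ordinal corresponding to the ordinal `α`. -/
def IsOrdZF (x : ZFSet) (α : Ordinal) : Prop :=
  x.IsOrdinal ∧ x.rank = α

/-- The ZFC set `x` codes the set of ordinals `b`. -/
def CodesSet (x : ZFSet) (b : Set Ordinal) : Prop :=
  ∀ y, y ∈ x ↔ ∃ α ∈ b, IsOrdZF y α

/-- `M ∩ λ`: the set of ordinals below `λ` whose von Neumann code lies in `M`. -/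
def ordsOf (lam : Cardinal) (M : Set ZFSet) : Set Ordinal :=
  {α | α < lam.ord ∧ ∃ x ∈ M, IsOrdZF x α}

/-- A slender `P_κ λ`-list: for every sufficiently large regular `θ` there is a club
`C ⊆ P_κ H_θ` such that `d_{M ∩ λ} ∩ b ∈ M` for all `M ∈ C` and all countable `b ∈ M`
with `b ⊆ λ`. -/
def IsSlender (κ lam : Cardinal) (d : Set Ordinal → Set Ordinal) : Prop :=
  ∃ θ₀ : Cardinal, ∀ θ, θ₀ ≤ θ → θ.IsRegular →
    ∃ C, IsClubIn κ {M : Set ZFSet.{0} | M ⊆ HSet θ ∧ #M < Cardinal.lift.{1} κ} C ∧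
      ∀ M ∈ C, ∀ b : Set Ordinal, b.Countable → (∀ α ∈ b, α < lam.ord) →
        (∃ x ∈ M, CodesSet x b) →
        ∃ x ∈ M, CodesSet x (d (ordsOf lam M) ∩ b)

/-- `e` is a cofinal branch of the list `d`. -/
def IsCofBranch (κ lam : Cardinal) (d : Set Ordinal → Set Ordinal) (e : Set Ordinal) : Prop :=
  (∀ α ∈ e, α < lam.ord) ∧
    ∀ a ∈ Pk κ lam, ∃ z ∈ Pk κ lam, a ⊆ z ∧ e ∩ a = d z ∩ a

/-- `e` is an ineffable branch of the list `d`. -/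
def IsIneffBranch (κ lam : Cardinal) (d : Set Ordinal → Set Ordinal) (e : Set Ordinal) : Prop :=
  (∀ α ∈ e, α < lam.ord) ∧
    IsStatIn κ (Pk κ lam) {a ∈ Pk κ lam | e ∩ a = d a}

/-- `TP(κ,λ)`: every thin `P_κ λ`-list has a cofinal branch. -/
def TP (κ lam : Cardinal) : Prop :=
  ∀ d, IsList κ lam d → IsThin κ lam d → ∃ e, IsCofBranch κ lam d e

/-- `SP(κ,λ)`: every slender `P_κ λ`-list has a cofinal branch. -/
def SP (κ lam : Cardinal) : Prop :=
  ∀ d, IsList κ lam d → IsSlender κ lam d → ∃ e, IsCofBranch κ lam d e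

/-- `ITP(κ,λ)`: every thin `P_κ λ`-list has an ineffable branch. -/
def ITP (κ lam : Cardinal) : Prop :=
  ∀ d, IsList κ lam d → IsThin κ lam d → ∃ e, IsIneffBranch κ lam d e

/-- `ISP(κ,λ)`: every slender `P_κ λ`-list has an ineffable branch. -/
def ISP (κ lam : Cardinal) : Prop :=
  ∀ d, IsList κ lam d → IsSlender κ lam d → ∃ e, IsIneffBranch κ lam d e

/-- The list `d` is `A`-effable. -/
def IsEffable (κ lam : Cardinal) (d : Set Ordinal → Set Ordinal) (A : Set (Set Ordinal)) : Prop :=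
  ∀ S, S ⊆ A → IsStatIn κ (Pk κ lam) S →
    ∃ a ∈ S, ∃ b ∈ S, a ⊆ b ∧ d a ≠ d b ∩ a

/-- The ideal `I_IT[κ,λ]`. -/
def IIT (κ lam : Cardinal) : Set (Set (Set Ordinal)) :=
  {A | A ⊆ Pk κ lam ∧ ∃ d, IsList κ lam d ∧ IsThin κ lam d ∧ IsEffable κ lam d A}

/-- The ideal `I_IS[κ,λ]`. -/
def IIS (κ lam : Cardinal) : Set (Set (Set Ordinal)) :=
  {A | A ⊆ Pk κ lam ∧ ∃ d, IsList κ lam d ∧ IsSlender κ lam d ∧ IsEffable κ lam d A}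

/-- The filter `F_IT[κ,λ]` dual to `I_IT[κ,λ]`. -/
def FIT (κ lam : Cardinal) : Set (Set (Set Ordinal)) :=
  {A | A ⊆ Pk κ lam ∧ (Pk κ lam \ A) ∈ IIT κ lam}

/-- `U` is an ultrafilter on the set `X`. -/
def IsUFOn {α : Type*} (X : Set α) (U : Set (Set α)) : Prop :=
  (∀ A ∈ U, A ⊆ X) ∧ X ∈ U ∧ ∅ ∉ U ∧
    (∀ A ∈ U, ∀ B, A ⊆ B → B ⊆ X → B ∈ U) ∧
    (∀ A ∈ U, ∀ B ∈ U, A ∩ B ∈ U) ∧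
    (∀ A, A ⊆ X → (A ∈ U ∨ X \ A ∈ U))

/-- `U` is `κ`-complete: closed under intersections of fewer than `κ` of its members. -/
def KComplete (κ : Cardinal.{0}) (X : Set (Set Ordinal)) (U : Set (Set (Set Ordinal))) : Prop :=
  ∀ s : Set (Set (Set Ordinal)), s ⊆ U → #s < Cardinal.lift.{1} κ → X ∩ ⋂₀ s ∈ U

/-- `U` is fine on `P_κ λ`. -/
def Fine (κ lam : Cardinal) (U : Set (Set (Set Ordinal))) : Prop :=
  ∀ x < lam.ord, {a ∈ Pk κ lam | x ∈ a} ∈ U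

/-- `U` is normal on `P_κ λ`: closed under diagonal intersections. -/
def NormalUF (κ lam : Cardinal) (U : Set (Set (Set Ordinal))) : Prop :=
  ∀ A : Ordinal → Set (Set Ordinal), (∀ x < lam.ord, A x ∈ U) →
    {a ∈ Pk κ lam | ∀ x ∈ a, a ∈ A x} ∈ U

/-- `κ` is strongly compact: for every `λ ≥ κ` there is a `κ`-complete fine
ultrafilter on `P_κ λ`. -/
def IsStronglyCompact (κ : Cardinal) : Prop :=
  ∀ lam : Cardinal, κ ≤ lam →
    ∃ U, IsUFOn (Pk κ lam) U ∧ KComplete κ (Pk κ lam) U ∧ Fine κ lam U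

/-- `κ` is supercompact: for every `λ ≥ κ` there is a `κ`-complete normal fine
ultrafilter on `P_κ λ`. -/
def IsSupercompact (κ : Cardinal) : Prop :=
  ∀ lam : Cardinal, κ ≤ lam →
    ∃ U, IsUFOn (Pk κ lam) U ∧ KComplete κ (Pk κ lam) U ∧ Fine κ lam U ∧ NormalUF κ lam U

/-- `C` is club in the ordinal `o`: unbounded in `o` and closed. -/
def OrdClub (o : Ordinal) (C : Set Ordinal) : Prop :=
  C ⊆ Set.Iio o ∧ (∀ β < o, ∃ γ ∈ C, β ≤ γ) ∧
    ∀ α < o, 0 < α → sSup (C ∩ Set.Iio α) = α → α ∈ C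

/-- `S` is stationary in the ordinal `o`. -/
def OrdStat (o : Ordinal) (S : Set Ordinal) : Prop :=
  S ⊆ Set.Iio o ∧ ∀ C, OrdClub o C → (S ∩ C).Nonempty

/-- `δ` is a limit point of `C`: `δ > 0` and `δ = sup (C ∩ δ)`. -/
def IsLimPt (C : Set Ordinal) (δ : Ordinal) : Prop :=
  0 < δ ∧ sSup (C ∩ Set.Iio δ) = δ

/-- `κ` is an ineffable cardinal. -/
def IsIneffableCard (κ : Cardinal) : Prop :=
  ∀ d : Ordinal → Set Ordinal, (∀ α < κ.ord, d α ⊆ Set.Iio α) →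
    ∃ e ⊆ Set.Iio κ.ord, OrdStat κ.ord {α | α < κ.ord ∧ e ∩ Set.Iio α = d α}

/-- A `□_E(κ,λ)`-sequence. -/
def IsSquareSeq (κ : Cardinal.{0}) (lam : Ordinal.{0}) (E : Set Ordinal.{0})
    (𝒞 : Ordinal.{0} → Set (Set Ordinal.{0})) : Prop :=
  (∀ α, Order.IsSuccLimit α → α ∈ E → α < lam →
    ((𝒞 α).Nonempty ∧ #(𝒞 α) < Cardinal.lift.{1} κ) ∧
      ∀ C ∈ 𝒞 α, OrdClub α C ∧ ∀ β, IsLimPt C β → β ∈ E → C ∩ Set.Iio β ∈ 𝒞 β) ∧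
  ¬∃ D, OrdClub lam D ∧ ∀ δ, IsLimPt D δ → δ ∈ E → δ < lam → D ∩ Set.Iio δ ∈ 𝒞 δ

/-- `□_E(κ,λ)` holds. -/
def SquareE (κ : Cardinal.{0}) (lam : Ordinal.{0}) (E : Set Ordinal.{0}) : Prop :=
  ∃ 𝒞, IsSquareSeq κ lam E 𝒞

/-- `(a, ∈) ≺ (λ, ∈)`: `a` is an elementary substructure of the ordinals below `lam`
(with `∈`, equivalently the order, as the only relation). -/
def ElemSubOrd (lam : Ordinal) (a : Set Ordinal) : Prop :=
  letI := FirstOrder.Language.orderStructure ↥a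
  letI := FirstOrder.Language.orderStructure ↥(Set.Iio lam)
  ∃ h : a ⊆ Set.Iio lam,
    ∀ (n : ℕ) (φ : FirstOrder.Language.order.Formula (Fin n)) (v : Fin n → ↥a),
      φ.Realize v ↔ φ.Realize fun i => Set.inclusion h (v i)

/-- `P'_κ λ`: the members `a` of `P_κ λ` with `a ∩ κ` an ordinal and `(a,∈) ≺ (λ,∈)`. -/
def P'k (κ lam : Cardinal) : Set (Set Ordinal) :=
  {a ∈ Pk κ lam | (∃ β : Ordinal, a ∩ Set.Iio κ.ord = Set.Iio β) ∧ ElemSubOrd lam.ord a}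

/-- `κ_a`: the ordinal `a ∩ κ` (for `a ∈ P'_κ λ`). -/
noncomputable def kapOf (κ : Cardinal) (a : Set Ordinal) : Ordinal :=
  sInf {β : Ordinal | a ∩ Set.Iio κ.ord ⊆ Set.Iio β}
/-! Closure under subsets is immediate, and a nonstationary `A` is `A`-effable for every list,
vacuously. For `A ∪ B`, glue the two witnessing lists along `A`: a stationary subset of `A ∪ B`
has a stationary part inside `A` or outside `A`, hence inside `B`.

For normality, fix thin lists `d γ` witnessing `{a ∈ D | g a = γ} ∈ I_IT` and a pairing
`⟨·, ·⟩` on `λ`, and put `f a = {⟨g a, ξ⟩ : ξ ∈ d_{g a}(a)} ∩ a`. For `c` closed under the pairing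
and its projections, `f a ∩ c` is empty unless `g a ∈ c`, in which case it is the image of
`d_{g a}(a) ∩ c`; so on the diagonal intersection of the thinness clubs of the `d γ`, `f` has at most
`|c| · sup_γ #traces + 1 < κ` traces on `c`. Given a stationary `S ⊆ D`, Fodor's lemma (from the
normality of the club filter) gives a stationary fibre `g = γ` among the closed `a ∈ S`, and there
the effability of `d γ` transfers to `f` because `⟨γ, ·⟩` is injective. -/

section Pk

variable {κ lam : Cardinal.{0}}

theorem union_mem_Pk (hreg : κ.IsRegular) {a b : Set Ordinal} (ha : a ∈ Pk κ lam)
    (hb : b ∈ Pk κ lam) : a ∪ b ∈ Pk κ lam :=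
  ⟨fun α h => h.elim (ha.1 α) (hb.1 α),
    (mk_union_le a b).trans_lt (add_lt_of_lt hreg.lift.aleph0_le ha.2 hb.2)⟩

theorem biUnion_mem_Pk (hreg : κ.IsRegular) {s : Set Ordinal} (hs : #s < lift.{1} κ)
    {t : Ordinal → Set Ordinal} (ht : ∀ i ∈ s, t i ∈ Pk κ lam) : (⋃ i ∈ s, t i) ∈ Pk κ lam :=
  ⟨fun α hα => by
      obtain ⟨i, hi, hαi⟩ := mem_iUnion₂.1 hα
      exact (ht i hi).1 α hαi,
    (card_biUnion_lt_iff_forall_of_isRegular hreg.lift hs).2 fun i hi => (ht i hi).2⟩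

theorem Set.Finite.mem_Pk (hreg : κ.IsRegular) {a : Set Ordinal} (ha : a.Finite)
    (hlt : ∀ α ∈ a, α < lam.ord) : a ∈ Pk κ lam :=
  ⟨hlt, ha.lt_aleph0.trans_le hreg.lift.aleph0_le⟩

end Pk

section Club

variable {κ : Cardinal.{0}} {X : Type*} {S C C₁ C₂ T : Set (Set X)}

theorem IsClubIn.exists_extend (hC : IsClubIn κ S C) :
    ∃ G : Set X → Set X, ∀ a ∈ S, G a ∈ C ∧ a ⊆ G a := by
  classical
  exact ⟨fun a => if ha : a ∈ S then (hC.2.1 a ha).choose else a,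
    fun a ha => by simpa only [dif_pos ha] using (hC.2.1 a ha).choose_spec⟩

theorem IsClubIn.iUnion_mem (hunc : ℵ₀ < κ) (hC : IsClubIn κ S C) {u : ℕ → Set X}
    (hu : Monotone u) (hmem : ∀ n, u n ∈ C) : (⋃ n, u n) ∈ C := by
  have hω := hC.2.2 Ordinal.omega0 Ordinal.omega0_pos (by rwa [Ordinal.card_omega0])
    (fun β => u β.card.toNat) (fun β _ => hmem _) ?_
  · convert hω using 1
    refine Subset.antisymm (iUnion_subset fun n => ?_) (iUnion₂_subset fun β _ => ?_)
    · have h := subset_biUnion_of_mem (u := fun β => u β.card.toNat)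
        (mem_Iio.2 (Ordinal.natCast_lt_omega0 n))
      simpa only [Ordinal.card_nat, toNat_natCast] using h
    · exact subset_iUnion u _
  · intro β γ hβγ hγ
    obtain ⟨m, rfl⟩ := Ordinal.lt_omega0.1 (hβγ.trans_lt hγ)
    obtain ⟨n, rfl⟩ := Ordinal.lt_omega0.1 hγ
    simpa using hu (by exact_mod_cast hβγ)

theorem IsClubIn.iUnion_mem_of_interleave (hunc : ℵ₀ < κ) (hC : IsClubIn κ S C)
    {u v : ℕ → Set X} (huv : ∀ n, u n ⊆ v n) (hvu : ∀ n, v n ⊆ u (n + 1))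
    (hv : ∀ n, v n ∈ C) : (⋃ n, u n) ∈ C := by
  have hunion : (⋃ n, v n) = ⋃ n, u n :=
    Subset.antisymm (iUnion_mono' fun n => ⟨n + 1, hvu n⟩) (iUnion_mono huv)
  rw [← hunion]
  exact hC.iUnion_mem hunc (monotone_nat_of_le_succ fun n => (hvu n).trans (huv _)) hv

theorem IsClubIn.inter (hunc : ℵ₀ < κ) (h₁ : IsClubIn κ S C₁) (h₂ : IsClubIn κ S C₂) :
    IsClubIn κ S (C₁ ∩ C₂) := by
  refine ⟨fun c hc => h₁.1 hc.1, fun a ha => ?_, fun δ h0 hδ f hf hmono =>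
    ⟨h₁.2.2 δ h0 hδ f (fun β hβ => (hf β hβ).1) hmono,
      h₂.2.2 δ h0 hδ f (fun β hβ => (hf β hβ).2) hmono⟩⟩
  obtain ⟨G₁, hG₁⟩ := h₁.exists_extend
  obtain ⟨G₂, hG₂⟩ := h₂.exists_extend
  set P : ℕ → Set X := fun n => (G₁ ∘ G₂)^[n] (G₁ a)
  have hP : ∀ n, P n ∈ C₁ ∧ G₂ (P n) ∈ C₂ := by
    intro n
    induction n with
    | zero => exact ⟨(hG₁ a ha).1, (hG₂ _ (h₁.1 (hG₁ a ha).1)).1⟩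
    | succ n ih =>
      have h : P (n + 1) ∈ C₁ := by
        simp only [P, Function.iterate_succ_apply']
        exact (hG₁ _ (h₂.1 ih.2)).1
      exact ⟨h, (hG₂ _ (h₁.1 h)).1⟩
  have hPQ : ∀ n, P n ⊆ G₂ (P n) := fun n => (hG₂ _ (h₁.1 (hP n).1)).2
  have hQP : ∀ n, G₂ (P n) ⊆ P (n + 1) := fun n => by
    simp only [P, Function.iterate_succ_apply']
    exact (hG₁ _ (h₂.1 (hP n).2)).2
  refine ⟨⋃ n, P n, ⟨?_, h₂.iUnion_mem_of_interleave hunc hPQ hQP fun n => (hP n).2⟩,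
    (hG₁ a ha).2.trans (subset_iUnion P 0)⟩
  exact h₁.iUnion_mem hunc (monotone_nat_of_le_succ fun n => (hPQ n).trans (hQP n))
    fun n => (hP n).1

theorem IsStatIn.inter_club (hunc : ℵ₀ < κ) (hT : IsStatIn κ S T) (hC : IsClubIn κ S C) :
    IsStatIn κ S (T ∩ C) := by
  refine ⟨fun x hx => hT.1 hx.1, fun C' hC' => ?_⟩
  obtain ⟨x, hxT, hxC, hxC'⟩ := hT.2 _ (hC.inter hunc hC')
  exact ⟨x, ⟨hxT, hxC⟩, hxC'⟩

theorem IsStatIn.inter_or_diff (hunc : ℵ₀ < κ) (hT : IsStatIn κ S T) (A : Set (Set X)) :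
    IsStatIn κ S (T ∩ A) ∨ IsStatIn κ S (T \ A) := by
  by_contra! h
  obtain ⟨h₁, h₂⟩ := h
  unfold IsStatIn at h₁ h₂
  push Not at h₁ h₂
  obtain ⟨C₁, hC₁, e₁⟩ := h₁ (inter_subset_left.trans hT.1)
  obtain ⟨C₂, hC₂, e₂⟩ := h₂ (sdiff_subset.trans hT.1)
  obtain ⟨x, hxT, hx₁, hx₂⟩ := hT.2 _ (hC₁.inter hunc hC₂)
  by_cases hxA : x ∈ A
  · exact e₁.subset ⟨⟨hxT, hxA⟩, hx₁⟩
  · exact e₂.subset ⟨⟨hxT, hxA⟩, hx₂⟩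

end Club

section PkClub

variable {κ lam : Cardinal.{0}}

theorem isClubIn_Pk (hreg : κ.IsRegular) : IsClubIn κ (Pk κ lam) (Pk κ lam) :=
  ⟨subset_rfl, fun a ha => ⟨a, ha, subset_rfl⟩, fun δ _ hδ f hf _ =>
    biUnion_mem_Pk hreg (by rwa [mk_Iio_ordinal, lift_lt]) hf⟩

theorem exists_chain_absorbing (hreg : κ.IsRegular) {H : Ordinal → Set Ordinal → Set Ordinal}
    (hH : ∀ b ∈ Pk κ lam, ∀ γ ∈ b, H γ b ∈ Pk κ lam) {a : Set Ordinal} (ha : a ∈ Pk κ lam) :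
    ∃ u : ℕ → Set Ordinal, Monotone u ∧ u 0 = a ∧ (∀ n, u n ∈ Pk κ lam) ∧
      ∀ n, ∀ γ ∈ u n, H γ (u n) ⊆ u (n + 1) := by
  set F : Set Ordinal → Set Ordinal := fun b => b ∪ ⋃ γ ∈ b, H γ b
  have hF : MapsTo F (Pk κ lam) (Pk κ lam) := fun b hb =>
    union_mem_Pk hreg hb (biUnion_mem_Pk hreg hb.2 (hH b hb))
  refine ⟨fun n => F^[n] a, monotone_nat_of_le_succ fun n => ?_, rfl,
    fun n => hF.iterate n ha, fun n γ hγ => ?_⟩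
  · rw [Function.iterate_succ_apply']
    exact subset_union_left
  · simp only [Function.iterate_succ_apply']
    exact subset_biUnion_of_mem (u := fun γ => H γ _) hγ |>.trans subset_union_right

theorem isClubIn_closedUnder (hreg : κ.IsRegular) (hunc : ℵ₀ < κ) {h : Ordinal → Set Ordinal}
    (hh : ∀ η < lam.ord, h η ∈ Pk κ lam) :
    IsClubIn κ (Pk κ lam) {c | c ∈ Pk κ lam ∧ ∀ η ∈ c, h η ⊆ c} := by
  refine ⟨fun c hc => hc.1, fun a ha => ?_, fun δ h0 hδ f hf hmono => ?_⟩
  · obtain ⟨u, hu, hu0, huPk, hus⟩ :=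
      exists_chain_absorbing hreg (H := fun η _ => h η) (fun b hb η hη => hh η (hb.1 η hη)) ha
    refine ⟨⋃ n, u n, ⟨(isClubIn_Pk hreg).iUnion_mem hunc hu huPk, fun η hη => ?_⟩,
      hu0 ▸ subset_iUnion u 0⟩
    obtain ⟨n, hn⟩ := mem_iUnion.1 hη
    exact (hus n η hn).trans (subset_iUnion u _)
  · refine ⟨(isClubIn_Pk hreg).2.2 δ h0 hδ f (fun β hβ => (hf β hβ).1) hmono, fun η hη => ?_⟩
    obtain ⟨β, hβ, hηβ⟩ := mem_iUnion₂.1 hη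
    exact ((hf β hβ).2 η hηβ).trans (subset_biUnion_of_mem (u := f) hβ)

theorem isClubIn_diagInter (hreg : κ.IsRegular) (hunc : ℵ₀ < κ)
    {E : Ordinal → Set (Set Ordinal)} (hE : ∀ γ < lam.ord, IsClubIn κ (Pk κ lam) (E γ)) :
    IsClubIn κ (Pk κ lam) {c | c ∈ Pk κ lam ∧ ∀ γ ∈ c, c ∈ E γ} := by
  refine ⟨fun c hc => hc.1, fun a ha => ?_, fun δ h0 hδ f hf hmono => ?_⟩
  · choose! G hG using fun γ hγ => (hE γ hγ).exists_extend
    obtain ⟨u, hu, hu0, huPk, hus⟩ := exists_chain_absorbing hreg (H := G) (fun b hb γ hγ =>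
      (hE γ (hb.1 γ hγ)).1 (hG γ (hb.1 γ hγ) b hb).1) ha
    refine ⟨⋃ n, u n, ⟨(isClubIn_Pk hreg).iUnion_mem hunc hu huPk, fun γ hγ => ?_⟩,
      hu0 ▸ subset_iUnion u 0⟩
    obtain ⟨n₀, hn₀⟩ := mem_iUnion.1 hγ
    have hγlt : γ < lam.ord := (huPk n₀).1 γ hn₀
    have hγu : ∀ k, γ ∈ u (k + n₀) := fun k => hu (Nat.le_add_left n₀ k) hn₀
    have htail := (hE γ hγlt).iUnion_mem_of_interleave hunc (u := fun k => u (k + n₀))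
      (fun k => (hG γ hγlt _ (huPk _)).2)
      (fun k => (hus _ γ (hγu k)).trans (hu (by omega)))
      (fun k => (hG γ hγlt _ (huPk _)).1)
    rwa [show (⋃ k, u (k + n₀)) = ⋃ n, u n from hu.iSup_nat_add n₀] at htail
  · refine ⟨(isClubIn_Pk hreg).2.2 δ h0 hδ f (fun β hβ => (hf β hβ).1) hmono, fun γ hγ => ?_⟩
    obtain ⟨β₀, hβ₀, hγβ₀⟩ := mem_iUnion₂.1 hγ
    -- the tail `f (max β₀ β)` of the chain lies in `E γ` and has the same union
    have htail := (hE γ ((hf β₀ hβ₀).1.1 γ hγβ₀)).2.2 δ h0 hδ (fun β => f (max β₀ β))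
      (fun β hβ => (hf _ (max_lt hβ₀ hβ)).2 γ
        (hmono _ _ (le_max_left _ _) (max_lt hβ₀ hβ) hγβ₀))
      (fun β β' hββ' hβ' => hmono _ _ (max_le_max_left β₀ hββ') (max_lt hβ₀ hβ'))
    convert htail using 1
    refine Subset.antisymm (iUnion₂_mono fun β hβ => hmono _ _ (le_max_right _ _)
      (max_lt hβ₀ hβ)) (iUnion₂_subset fun β hβ => ?_)
    exact subset_biUnion_of_mem (u := f) (mem_Iio.2 (max_lt hβ₀ hβ))

theorem isClubIn_nonempty (hreg : κ.IsRegular) (hlam : 0 < lam) :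
    IsClubIn κ (Pk κ lam) {c | c ∈ Pk κ lam ∧ c.Nonempty} := by
  refine ⟨fun c hc => hc.1, fun a ha => ?_, fun δ h0 hδ f hf hmono => ?_⟩
  · have h0Pk : ({0} : Set Ordinal) ∈ Pk κ lam :=
      (finite_singleton 0).mem_Pk hreg fun α hα => hα ▸ ord_pos.2 hlam
    exact ⟨{0} ∪ a, ⟨union_mem_Pk hreg h0Pk ha, ⟨0, Or.inl rfl⟩⟩, subset_union_right⟩
  · obtain ⟨x, hx⟩ := (hf 0 h0).2
    exact ⟨(isClubIn_Pk hreg).2.2 δ h0 hδ f (fun β hβ => (hf β hβ).1) hmono,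
      x, mem_biUnion h0 hx⟩

theorem IsStatIn.exists_isStatIn_fiber (hreg : κ.IsRegular) (hunc : ℵ₀ < κ)
    {S : Set (Set Ordinal)} (hS : IsStatIn κ (Pk κ lam) S) {g : Set Ordinal → Ordinal}
    (hg : ∀ a ∈ S, g a ∈ a) : ∃ γ < lam.ord, IsStatIn κ (Pk κ lam) {a ∈ S | g a = γ} := by
  by_contra! hns
  have hclub : ∀ γ < lam.ord, ∃ E, IsClubIn κ (Pk κ lam) E ∧ {a ∈ S | g a = γ} ∩ E = ∅ := by
    intro γ hγ
    have h := hns γ hγ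
    unfold IsStatIn at h
    push Not at h
    exact h fun a ha => hS.1 ha.1
  choose! E hE hdisj using hclub
  obtain ⟨a, haS, haPk, haE⟩ := hS.2 _ (isClubIn_diagInter hreg hunc hE)
  have hga : g a < lam.ord := haPk.1 _ (hg a haS)
  exact (hdisj _ hga).subset ⟨⟨haS, rfl⟩, haE _ (hg a haS)⟩

end PkClub

structure OrdPairing (lam : Cardinal.{0}) where
  pair : Ordinal.{0} → Ordinal.{0} → Ordinal.{0}
  fst : Ordinal.{0} → Ordinal.{0}
  snd : Ordinal.{0} → Ordinal.{0}
  pair_lt : ∀ γ < lam.ord, ∀ ξ < lam.ord, pair γ ξ < lam.ord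
  fst_lt : ∀ η < lam.ord, fst η < lam.ord
  snd_lt : ∀ η < lam.ord, snd η < lam.ord
  fst_pair : ∀ γ < lam.ord, ∀ ξ < lam.ord, fst (pair γ ξ) = γ
  snd_pair : ∀ γ < lam.ord, ∀ ξ < lam.ord, snd (pair γ ξ) = ξ

namespace OrdPairing

variable {κ lam : Cardinal.{0}}

theorem nonempty (hlam : ℵ₀ ≤ lam) : Nonempty (OrdPairing lam) := by
  have hcard : #(Iio lam.ord × Iio lam.ord) = #(Iio lam.ord) := by
    rw [mk_prod, lift_id, mk_Iio_ordinal, card_ord, ← lift_mul, mul_eq_self hlam]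
  obtain ⟨e⟩ := Cardinal.eq.1 hcard
  refine ⟨{
    pair := fun γ ξ => if h : γ < lam.ord ∧ ξ < lam.ord then e (⟨γ, h.1⟩, ⟨ξ, h.2⟩) else 0
    fst := fun η => if h : η < lam.ord then (e.symm ⟨η, h⟩).1 else 0
    snd := fun η => if h : η < lam.ord then (e.symm ⟨η, h⟩).2 else 0
    pair_lt := ?_, fst_lt := ?_, snd_lt := ?_, fst_pair := ?_, snd_pair := ?_ }⟩
  · intro γ hγ ξ hξ
    simpa only [dif_pos (And.intro hγ hξ)] using mem_Iio.1 (e _).2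
  · intro η hη
    simpa only [dif_pos hη] using mem_Iio.1 (e.symm _).1.2
  · intro η hη
    simpa only [dif_pos hη] using mem_Iio.1 (e.symm _).2.2
  all_goals
    intro γ hγ ξ hξ
    simp [hγ, hξ, mem_Iio.1 (e (⟨γ, hγ⟩, ⟨ξ, hξ⟩)).2]

variable (P : OrdPairing lam)

theorem injOn_pair {γ : Ordinal} (hγ : γ < lam.ord) : InjOn (P.pair γ) (Iio lam.ord) :=
  LeftInvOn.injOn (f₁' := P.snd) fun ξ hξ => P.snd_pair γ hγ ξ hξ

def IsClosed (c : Set Ordinal) : Prop :=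
  (∀ γ ∈ c, ∀ ξ ∈ c, P.pair γ ξ ∈ c) ∧ ∀ η ∈ c, P.fst η ∈ c ∧ P.snd η ∈ c

theorem isClubIn_isClosed (hreg : κ.IsRegular) (hunc : ℵ₀ < κ) :
    IsClubIn κ (Pk κ lam) {c | c ∈ Pk κ lam ∧ P.IsClosed c} := by
  have hpair := isClubIn_diagInter hreg hunc fun γ hγ =>
    isClubIn_closedUnder (h := fun ξ => {P.pair γ ξ}) hreg hunc fun ξ hξ =>
      (finite_singleton _).mem_Pk hreg fun _ h => h ▸ P.pair_lt γ hγ ξ hξ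
  have hproj := isClubIn_closedUnder (h := fun η => {P.fst η, P.snd η}) hreg hunc fun η hη =>
    (toFinite _).mem_Pk hreg (by
      rintro _ (rfl | rfl)
      exacts [P.fst_lt η hη, P.snd_lt η hη])
  convert hpair.inter hunc hproj using 1
  ext c
  simp only [IsClosed, mem_ofPred_eq, mem_inter_iff, singleton_subset_iff, insert_subset_iff]
  exact ⟨fun ⟨hc, hpair, hproj⟩ => ⟨⟨hc, fun γ hγ => ⟨hc, hpair γ hγ⟩⟩, hc, hproj⟩,
    fun ⟨⟨hc, hpair⟩, _, hproj⟩ => ⟨hc, fun γ hγ => (hpair γ hγ).2, hproj⟩⟩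

end OrdPairing

section Lists

variable {κ lam : Cardinal.{0}} {d e : Set Ordinal → Set Ordinal} {A B : Set (Set Ordinal)}

theorem isThin_const_empty (hreg : κ.IsRegular) : IsThin κ lam fun _ => ∅ := by
  refine ⟨Pk κ lam, isClubIn_Pk hreg, fun c _ => ?_⟩
  refine lt_of_le_of_lt (Subsingleton.cardinalMk_le_one ?_)
    (one_lt_aleph0.trans_le hreg.lift.aleph0_le)
  rintro _ ⟨_, -, -, rfl⟩ _ ⟨_, -, -, rfl⟩
  rfl

theorem isEffable_of_not_isStatIn (hA : A ⊆ Pk κ lam) (hns : ¬IsStatIn κ (Pk κ lam) A) :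
    IsEffable κ lam d A :=
  fun _ hSA hS => (hns ⟨hA, fun C hC => (hS.2 C hC).mono (inter_subset_inter_left C hSA)⟩).elim

variable [DecidablePred (· ∈ A)]

theorem IsList.piecewise (hd : IsList κ lam d) (he : IsList κ lam e) :
    IsList κ lam (A.piecewise d e) := fun a ha => by
  by_cases h : a ∈ A
  · simpa only [piecewise_eq_of_mem _ _ _ h] using hd a ha
  · simpa only [piecewise_eq_of_notMem _ _ _ h] using he a ha

theorem IsThin.piecewise (hunc : ℵ₀ < κ) (hd : IsThin κ lam d) (he : IsThin κ lam e) :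
    IsThin κ lam (A.piecewise d e) := by
  obtain ⟨C₁, hC₁, hd⟩ := hd
  obtain ⟨C₂, hC₂, he⟩ := he
  refine ⟨C₁ ∩ C₂, hC₁.inter hunc hC₂, fun c hc => ?_⟩
  have hsub : {x | ∃ a ∈ Pk κ lam, c ⊆ a ∧ x = A.piecewise d e a ∩ c} ⊆
      {x | ∃ a ∈ Pk κ lam, c ⊆ a ∧ x = d a ∩ c} ∪ {x | ∃ a ∈ Pk κ lam, c ⊆ a ∧ x = e a ∩ c} := by
    rintro _ ⟨a, ha, hca, rfl⟩
    by_cases h : a ∈ A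
    · exact Or.inl ⟨a, ha, hca, by rw [piecewise_eq_of_mem _ _ _ h]⟩
    · exact Or.inr ⟨a, ha, hca, by rw [piecewise_eq_of_notMem _ _ _ h]⟩
  exact (mk_le_mk_of_subset hsub).trans_lt <| (mk_union_le _ _).trans_lt <|
    add_lt_of_lt (aleph0_le_lift.2 (hunc.le)) (hd c hc.1) (he c hc.2)

theorem IsEffable.piecewise (hunc : ℵ₀ < κ) (hd : IsEffable κ lam d A)
    (he : IsEffable κ lam e B) : IsEffable κ lam (A.piecewise d e) (A ∪ B) := by
  intro S hSAB hS
  rcases hS.inter_or_diff hunc A with hSA | hSA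
  · obtain ⟨a, ha, b, hb, hab, hne⟩ := hd _ inter_subset_right hSA
    refine ⟨a, ha.1, b, hb.1, hab, ?_⟩
    rwa [piecewise_eq_of_mem _ _ _ ha.2, piecewise_eq_of_mem _ _ _ hb.2]
  · obtain ⟨a, ha, b, hb, hab, hne⟩ :=
      he _ (fun x hx => (hSAB hx.1).resolve_left hx.2) hSA
    refine ⟨a, ha.1, b, hb.1, hab, ?_⟩
    rwa [piecewise_eq_of_notMem _ _ _ ha.2, piecewise_eq_of_notMem _ _ _ hb.2]

end Lists

namespace OrdPairing

variable {κ lam : Cardinal.{0}} (P : OrdPairing lam) (g : Set Ordinal → Ordinal)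
  (d : Ordinal → Set Ordinal → Set Ordinal)

def codedList (a : Set Ordinal) : Set Ordinal :=
  {η ∈ a | g a < lam.ord ∧ η ∈ P.pair (g a) '' d (g a) a}

theorem isList_codedList : IsList κ lam (P.codedList g d) := fun _ _ => sep_subset _ _

variable {P g d} {a c : Set Ordinal}

theorem codedList_inter_of_mem (hd : ∀ γ < lam.ord, IsList κ lam (d γ)) (ha : a ∈ Pk κ lam)
    (hca : c ⊆ a) (hc : P.IsClosed c) (hg : g a ∈ c) :
    P.codedList g d a ∩ c = P.pair (g a) '' (d (g a) a ∩ c) := by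
  have hγ : g a < lam.ord := ha.1 _ (hca hg)
  ext η
  constructor
  · rintro ⟨⟨-, -, ξ, hξ, rfl⟩, hηc⟩
    have hξc := (hc.2 _ hηc).2
    rw [P.snd_pair _ hγ _ (ha.1 _ (hd _ hγ a ha hξ))] at hξc
    exact ⟨ξ, ⟨hξ, hξc⟩, rfl⟩
  · rintro ⟨ξ, ⟨hξ, hξc⟩, rfl⟩
    have hηc := hc.1 _ hg _ hξc
    exact ⟨⟨hca hηc, hγ, ξ, hξ, rfl⟩, hηc⟩

theorem codedList_inter_of_notMem (hd : ∀ γ < lam.ord, IsList κ lam (d γ))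
    (ha : a ∈ Pk κ lam) (hc : P.IsClosed c) (hg : g a ∉ c) : P.codedList g d a ∩ c = ∅ := by
  refine eq_empty_of_forall_notMem ?_
  rintro _ ⟨⟨-, hγ, ξ, hξ, rfl⟩, hηc⟩
  have hγc := (hc.2 _ hηc).1
  rw [P.fst_pair _ hγ _ (ha.1 _ (hd _ hγ a ha hξ))] at hγc
  exact hg hγc

variable (P g)

theorem isThin_codedList (hreg : κ.IsRegular) (hunc : ℵ₀ < κ)
    (hd : ∀ γ < lam.ord, IsList κ lam (d γ) ∧ IsThin κ lam (d γ)) :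
    IsThin κ lam (P.codedList g d) := by
  choose! E hE hEthin using fun γ hγ => (hd γ hγ).2
  refine ⟨_, (isClubIn_diagInter hreg hunc hE).inter hunc (P.isClubIn_isClosed hreg hunc),
    fun c ⟨⟨hcPk, hcE⟩, _, hc⟩ => ?_⟩
  have hsub : {x | ∃ a ∈ Pk κ lam, c ⊆ a ∧ x = P.codedList g d a ∩ c} ⊆
      insert ∅ (⋃ γ ∈ c, image (P.pair γ) '' {x | ∃ a ∈ Pk κ lam, c ⊆ a ∧ x = d γ a ∩ c}) := by
    rintro _ ⟨a, ha, hca, rfl⟩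
    by_cases hg : g a ∈ c
    · rw [codedList_inter_of_mem (fun γ hγ => (hd γ hγ).1) ha hca hc hg]
      exact mem_insert_of_mem _ (mem_biUnion hg ⟨_, ⟨a, ha, hca, rfl⟩, rfl⟩)
    · rw [codedList_inter_of_notMem (fun γ hγ => (hd γ hγ).1) ha hc hg]
      exact mem_insert _ _
  refine (mk_le_mk_of_subset hsub).trans_lt <| mk_insert_le.trans_lt <|
    add_lt_of_lt hreg.lift.aleph0_le ?_ (one_lt_aleph0.trans_le hreg.lift.aleph0_le)
  refine (card_biUnion_lt_iff_forall_of_isRegular hreg.lift hcPk.2).2 fun γ hγ => ?_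
  exact mk_image_le.trans_lt (hEthin γ (hcPk.1 γ hγ) c (hcE γ hγ))

theorem isEffable_codedList (hreg : κ.IsRegular) (hunc : ℵ₀ < κ) (hlam : 0 < lam)
    {D : Set (Set Ordinal)} (hg : ∀ a ∈ D, a.Nonempty → g a ∈ a)
    (hd : ∀ γ < lam.ord, IsList κ lam (d γ) ∧ IsEffable κ lam (d γ) {a ∈ D | g a = γ}) :
    IsEffable κ lam (P.codedList g d) D := by
  have hlist γ hγ := (hd γ hγ).1
  intro S hSD hS
  have hS' := (hS.inter_club hunc (isClubIn_nonempty hreg hlam)).inter_club hunc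
    (P.isClubIn_isClosed hreg hunc)
  obtain ⟨γ, hγ, hfib⟩ := hS'.exists_isStatIn_fiber hreg hunc fun a ha => hg a (hSD ha.1.1) ha.1.2.2
  obtain ⟨a, ⟨⟨⟨haS, haPk, hane⟩, -, hac⟩, hga⟩, b, ⟨⟨⟨hbS, hbPk, -⟩, -⟩, hgb⟩, hab, hne⟩ :=
    (hd γ hγ).2 _ (fun x hx => ⟨hSD hx.1.1.1, hx.2⟩) hfib
  refine ⟨a, haS, b, hbS, hab, fun heq => hne ?_⟩
  have hγa : g a ∈ a := hg a (hSD haS) hane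
  have hfa : P.codedList g d a = P.pair γ '' d γ a := by
    rw [← inter_eq_left.2 (P.isList_codedList g d a haPk),
      codedList_inter_of_mem hlist haPk subset_rfl hac hγa, hga,
      inter_eq_left.2 (hlist γ hγ a haPk)]
  have hfb : P.codedList g d b ∩ a = P.pair γ '' (d γ b ∩ a) := by
    rw [codedList_inter_of_mem hlist hbPk hab hac (by rwa [hgb, ← hga]), hgb]
  rw [hfa, hfb] at heq
  exact ((P.injOn_pair hγ).image_eq_image_iff (fun ξ hξ => haPk.1 ξ (hlist γ hγ a haPk hξ))
    fun ξ hξ => haPk.1 ξ hξ.2).1 heq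

end OrdPairing

section Ideal

variable {κ lam : Cardinal.{0}} {A B : Set (Set Ordinal)}

theorem mem_IIT_of_not_isStatIn (hreg : κ.IsRegular) (hA : A ⊆ Pk κ lam)
    (hns : ¬IsStatIn κ (Pk κ lam) A) : A ∈ IIT κ lam :=
  ⟨hA, fun _ => ∅, fun _ _ => empty_subset _, isThin_const_empty hreg,
    isEffable_of_not_isStatIn hA hns⟩

theorem mem_IIT_of_subset (hA : A ∈ IIT κ lam) (hBA : B ⊆ A) : B ∈ IIT κ lam := by
  obtain ⟨hAPk, d, hlist, hthin, heff⟩ := hA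
  exact ⟨hBA.trans hAPk, d, hlist, hthin, fun S hSB => heff S (hSB.trans hBA)⟩

theorem union_mem_IIT (hunc : ℵ₀ < κ) (hA : A ∈ IIT κ lam) (hB : B ∈ IIT κ lam) :
    A ∪ B ∈ IIT κ lam := by
  classical
  obtain ⟨hAPk, d, hdlist, hdthin, hdeff⟩ := hA
  obtain ⟨hBPk, e, helist, hethin, heeff⟩ := hB
  exact ⟨union_subset hAPk hBPk, A.piecewise d e, hdlist.piecewise helist,
    hdthin.piecewise hunc hethin, hdeff.piecewise hunc heeff⟩

theorem mem_IIT_of_regressive (hreg : κ.IsRegular) (hunc : ℵ₀ < κ) (hlam : ℵ₀ ≤ lam)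
    {D : Set (Set Ordinal)} (hD : D ⊆ Pk κ lam) {g : Set Ordinal → Ordinal}
    (hg : ∀ a ∈ D, a.Nonempty → g a ∈ a)
    (hfib : ∀ γ < lam.ord, {a ∈ D | g a = γ} ∈ IIT κ lam) : D ∈ IIT κ lam := by
  choose! d hdlist hdthin hdeff using fun γ hγ => (hfib γ hγ).2
  obtain ⟨P⟩ := OrdPairing.nonempty hlam
  exact ⟨hD, P.codedList g d, P.isList_codedList g d,
    P.isThin_codedList g hreg hunc fun γ hγ => ⟨hdlist γ hγ, hdthin γ hγ⟩,
    P.isEffable_codedList g hreg hunc (aleph0_pos.trans_le hlam) hg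
      fun γ hγ => ⟨hdlist γ hγ, hdeff γ hγ⟩⟩

end Ideal

theorem IIT_normal_ideal (κ lam : Cardinal.{0})
    (hreg : κ.IsRegular) (hunc : ℵ₀ < κ) (hle : κ ≤ lam) :
    (∀ A, A ⊆ Pk κ lam → ¬ IsStatIn κ (Pk κ lam) A → A ∈ IIT κ lam) ∧
    (∀ A ∈ IIT κ lam, ∀ B, B ⊆ A → B ∈ IIT κ lam) ∧
    (∀ A ∈ IIT κ lam, ∀ B ∈ IIT κ lam, A ∪ B ∈ IIT κ lam) ∧
    (∀ D, D ⊆ Pk κ lam → ∀ g : Set Ordinal → Ordinal,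
      (∀ a ∈ D, a.Nonempty → g a ∈ a) →
      (∀ γ < lam.ord, {a ∈ D | g a = γ} ∈ IIT κ lam) →
      D ∈ IIT κ lam) :=
  ⟨fun _ hA hns => mem_IIT_of_not_isStatIn hreg hA hns,
    fun _ hA _ hBA => mem_IIT_of_subset hA hBA,
    fun _ hA _ hB => union_mem_IIT hunc hA hB,
    fun _ hD _ hg hfib => mem_IIT_of_regressive hreg hunc (hunc.le.trans hle) hD hg hfib⟩
end

section
/- Suppose κ is a supercompact cardinal. Then □_{cof(<κ)}(κ,λ) fails for every cardinal λ ≥ κ with cf(λ) ≥ κ; in particular, □(λ) (that is, □_λ(2,λ)) fails for every λ ≥ κ with cf(λ) ≥ κ. -/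
open Cardinal Set

/-!
Let `U` be a normal fine `κ`-complete ultrafilter on `P_κ λ`. For `U`-almost every `a`, `sup a` is
a limit ordinal below `λ` of cofinality `< κ`, so we may pick a club `C_a ∈ 𝒞_{sup a}` and put
`D = {β < λ : β ∈ C_a for U-almost all a}` (in ultrapower terms `D = j⁻¹[C]` for some
`C ∈ j(𝒞)_{sup j''λ}`). Pressing down and countable completeness make `D` unbounded. If `δ` is a
limit point of `D` with `cf δ < κ`, then `κ`-completeness makes `δ` a limit point of almost every
`C_a`, so `C_a ∩ δ ∈ 𝒞_δ`; as `|𝒞_δ| < κ`, almost every `C_a ∩ δ` is one and the same `e`, and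
`D ∩ δ = e`. Limit points of `D` of countable cofinality are unbounded in `λ`, so coherence of `𝒞`
transfers this to every limit point of `D`: `D` threads `𝒞`.
-/

open Ordinal Order

universe u

section LimitPoints

variable {S T : Set Ordinal.{u}} {δ : Ordinal.{u}}

theorem isLimPt_iff : IsLimPt S δ ↔ 0 < δ ∧ ∀ y < δ, ∃ x ∈ S, y < x ∧ x < δ := by
  have hbdd : BddAbove (S ∩ Iio δ) := ⟨δ, fun x hx => hx.2.le⟩
  constructor
  · rintro ⟨hδ, hsup⟩
    refine ⟨hδ, fun y hy => ?_⟩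
    have hne : (S ∩ Iio δ).Nonempty := by
      rw [nonempty_iff_ne_empty]
      rintro h
      rw [h, csSup_empty] at hsup
      exact hδ.ne hsup
    obtain ⟨x, ⟨hxS, hxδ⟩, hyx⟩ := (lt_csSup_iff hbdd hne).1 (hsup ▸ hy)
    exact ⟨x, hxS, hyx, hxδ⟩
  · rintro ⟨hδ, h⟩
    refine ⟨hδ, le_antisymm (csSup_le' fun x hx => hx.2.le) (le_of_forall_lt fun y hy => ?_)⟩
    obtain ⟨x, hxS, hyx, hxδ⟩ := h y hy
    exact hyx.trans_le (le_csSup hbdd ⟨hxS, hxδ⟩)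

theorem IsLimPt.isSuccLimit (h : IsLimPt S δ) : IsSuccLimit δ := by
  obtain ⟨hδ, h⟩ := isLimPt_iff.1 h
  refine Ordinal.isSuccLimit_iff.2 ⟨hδ.ne', isSuccPrelimit_of_succ_lt fun y hy => ?_⟩
  obtain ⟨x, -, hyx, hxδ⟩ := h y hy
  exact (succ_le_of_lt hyx).trans_lt hxδ

theorem IsLimPt.mono (h : IsLimPt S δ) (hST : S ⊆ T) : IsLimPt T δ := by
  obtain ⟨hδ, h⟩ := isLimPt_iff.1 h
  exact isLimPt_iff.2 ⟨hδ, fun y hy => (h y hy).imp fun x hx => ⟨hST hx.1, hx.2⟩⟩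

theorem inter_Iio_inter_Iio {δ' : Ordinal.{u}} (hδ : δ ≤ δ') : S ∩ Iio δ' ∩ Iio δ = S ∩ Iio δ := by
  rw [inter_assoc, Iio_inter_Iio, min_eq_right hδ]

theorem isLimPt_inter_Iio {δ' : Ordinal.{u}} (hδ : δ ≤ δ') :
    IsLimPt (S ∩ Iio δ') δ ↔ IsLimPt S δ := by
  unfold IsLimPt
  rw [inter_Iio_inter_Iio hδ]

theorem IsLimPt.lift_cof_le_mk (h : IsLimPt S δ) : Cardinal.lift.{u + 1} δ.cof ≤ #S := by
  rw [Ordinal.lift_cof, ← Ordinal.cof_Iio]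
  refine (Order.cof_le (s := {y : Iio δ | y.1 ∈ S}) fun y => ?_).trans ?_
  · obtain ⟨x, hxS, hyx, hxδ⟩ := (isLimPt_iff.1 h).2 y y.2
    exact ⟨⟨x, hxδ⟩, hxS, hyx.le⟩
  · exact mk_le_of_injective (f := fun y => (⟨y.1.1, y.2⟩ : S)) fun y z h => by
      simpa [Subtype.ext_iff] using h

theorem IsLimPt.exists_subset_mk_le (h : IsLimPt S δ) :
    ∃ T ⊆ S, #T ≤ Cardinal.lift.{u + 1} δ.cof ∧ IsLimPt T δ := by
  obtain ⟨hδ, h⟩ := isLimPt_iff.1 h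
  obtain ⟨s, hs, hcard⟩ := Order.exists_cof_eq (Iio δ)
  choose d hdS hlt hdδ using fun y : s => h y.1.1 y.1.2
  refine ⟨range d, range_subset_iff.2 hdS, ?_, isLimPt_iff.2 ⟨hδ, fun y hy => ?_⟩⟩
  · rw [Ordinal.lift_cof, ← Ordinal.cof_Iio, ← hcard]
    exact mk_range_le
  · obtain ⟨z, hz, hyz⟩ := hs ⟨y, hy⟩
    exact ⟨d ⟨z, hz⟩, mem_range_self _, lt_of_le_of_lt hyz (hlt _), hdδ _⟩

theorem OrdClub.mem_of_isLimPt {o : Ordinal.{u}} (hS : OrdClub o S) (hδ : δ < o)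
    (h : IsLimPt S δ) : δ ∈ S :=
  hS.2.2 δ hδ h.1 h.2

theorem lt_sSup_of_succ_mem (hbdd : BddAbove S) (hsucc : ∀ x ∈ S, succ x ∈ S) {x : Ordinal.{u}}
    (hx : x ∈ S) : x < sSup S :=
  (lt_succ x).trans_le (le_csSup hbdd (hsucc x hx))

theorem isLimPt_sSup_of_succ_mem (hne : S.Nonempty) (hbdd : BddAbove S)
    (hsucc : ∀ x ∈ S, succ x ∈ S) : IsLimPt S (sSup S) := by
  obtain ⟨x₀, hx₀⟩ := hne
  refine isLimPt_iff.2 ⟨zero_le.trans_lt (lt_sSup_of_succ_mem hbdd hsucc hx₀),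
    fun y hy => ?_⟩
  obtain ⟨x, hx, hyx⟩ := (lt_csSup_iff hbdd ⟨x₀, hx₀⟩).1 hy
  exact ⟨x, hx, hyx, lt_sSup_of_succ_mem hbdd hsucc hx⟩

end LimitPoints

section NatSequences

variable {b : ℕ → Ordinal.{u}}

theorem exists_nat_seq_iSup_lt {o β : Ordinal.{u}} (ho : ℵ₀ < o.cof)
    (R : Ordinal.{u} → Ordinal.{u} → Prop) (hR : ∀ x < o, ∃ y < o, x < y ∧ R x y)
    (hβ : β < o) :
    ∃ b : ℕ → Ordinal.{u}, b 0 = β ∧ (∀ n, b n < b (n + 1) ∧ R (b n) (b (n + 1))) ∧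
      ⨆ n, b n < o := by
  choose! F hFo hF using hR
  have hb : ∀ n, F^[n] β < o := fun n => by
    induction n with
    | zero => exact hβ
    | succ n ih => rw [Function.iterate_succ_apply']; exact hFo _ ih
  refine ⟨fun n => F^[n] β, rfl, fun n => ?_, Ordinal.lift_iSup_lt_of_lt_cof ?_ hb⟩
  · simp only [Function.iterate_succ_apply']
    exact hF _ (hb n)
  · simpa using ho

theorem isLimPt_iSup_nat {S : Set Ordinal.{u}} (hb : ∀ n, b n < b (n + 1))
    (hS : ∀ n, ∃ x ∈ S, b n < x ∧ x ≤ b (n + 1)) : IsLimPt S (⨆ n, b n) := by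
  have hlt : ∀ n, b n < ⨆ n, b n := fun n => (hb n).trans_le (Ordinal.le_iSup b (n + 1))
  refine isLimPt_iff.2 ⟨zero_le.trans_lt (hlt 0), fun y hy => ?_⟩
  obtain ⟨n, hn⟩ := Ordinal.lt_iSup_iff.1 hy
  obtain ⟨x, hxS, hnx, hxn⟩ := hS n
  exact ⟨x, hxS, hn.trans hnx, hxn.trans_lt (hlt (n + 1))⟩

theorem cof_iSup_nat_le (hb : ∀ n, b n < b (n + 1)) : (⨆ n, b n).cof ≤ ℵ₀ := by
  have h := (isLimPt_iSup_nat (S := range b) hb fun n =>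
    ⟨b (n + 1), mem_range_self _, hb n, le_rfl⟩).lift_cof_le_mk
  exact Cardinal.lift_le_aleph0.1 (h.trans (countable_range b).le_aleph0)

end NatSequences

section Ultrafilters

variable {α : Type*} {X : Set α} {U : Set (Set α)} {A B : Set α}

theorem IsUFOn.nonempty_of_mem (hU : IsUFOn X U) (hA : A ∈ U) : A.Nonempty :=
  nonempty_iff_ne_empty.2 fun h => hU.2.2.1 (h ▸ hA)

theorem IsUFOn.inter_mem (hU : IsUFOn X U) (hA : A ∈ U) (hB : B ∈ U) : A ∩ B ∈ U :=
  hU.2.2.2.2.1 A hA B hB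

theorem IsUFOn.mem_of_subset (hU : IsUFOn X U) (hA : A ∈ U) (hAB : A ⊆ B) (hB : B ⊆ X) :
    B ∈ U :=
  hU.2.2.2.1 A hA B hAB hB

theorem IsUFOn.diff_mem_of_notMem (hU : IsUFOn X U) (hA : A ⊆ X) (h : A ∉ U) : X \ A ∈ U :=
  (hU.2.2.2.2.2 A hA).resolve_left h

end Ultrafilters

section CompleteUltrafilters

variable {κ lam : Cardinal.{0}} {X B : Set (Set Ordinal.{0})} {U : Set (Set (Set Ordinal.{0}))}

theorem KComplete.iInter_mem (hK : KComplete κ X U) {ι : Type*} {A : ι → Set (Set Ordinal)}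
    (hι : #(range A) < Cardinal.lift.{1} κ) (hA : ∀ i, A i ∈ U) : X ∩ ⋂ i, A i ∈ U := by
  rw [← sInter_range]
  exact hK _ (range_subset_iff.2 hA) hι

theorem KComplete.exists_mem_of_forall_exists (hK : KComplete κ X U) (hU : IsUFOn X U)
    (hB : B ∈ U) {T : Set (Set Ordinal)} (hT : #T < Cardinal.lift.{1} κ)
    {P : Set Ordinal → Set Ordinal → Prop} (h : ∀ a ∈ B, ∃ e ∈ T, P a e) :
    ∃ e ∈ T, {a ∈ B | P a e} ∈ U := by
  by_contra! hcon
  have hall := hK.iInter_mem (A := fun e : T => X \ {a ∈ B | P a e})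
    (mk_range_le.trans_lt hT) fun e =>
      hU.diff_mem_of_notMem (fun a ha => hU.1 B hB ha.1) (hcon e e.2)
  obtain ⟨a, haB, -, ha⟩ := hU.nonempty_of_mem (hU.inter_mem hB hall)
  obtain ⟨e, he, hPe⟩ := h a haB
  exact (mem_iInter.1 ha ⟨e, he⟩).2 ⟨haB, hPe⟩

theorem NormalUF.exists_mem_of_forall_exists (hN : NormalUF κ lam U)
    (hU : IsUFOn (Pk κ lam) U) (hB : B ∈ U) {P : Set Ordinal → Ordinal → Prop}
    (h : ∀ a ∈ B, ∃ x ∈ a, P a x) : ∃ x < lam.ord, {a ∈ B | P a x} ∈ U := by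
  by_contra! hcon
  have hdiag := hN (fun x => Pk κ lam \ {a ∈ B | P a x}) fun x hx =>
    hU.diff_mem_of_notMem (fun a ha => hU.1 B hB ha.1) (hcon x hx)
  obtain ⟨a, haB, -, ha⟩ := hU.nonempty_of_mem (hU.inter_mem hB hdiag)
  obtain ⟨x, hxa, hPx⟩ := h a haB
  exact (ha x hxa).2 ⟨haB, hPx⟩

end CompleteUltrafilters

structure IsNormalMeasure (κ lam : Cardinal.{0}) (U : Set (Set (Set Ordinal.{0}))) : Prop where
  isUFOn : IsUFOn (Pk κ lam) U
  kComplete : KComplete κ (Pk κ lam) U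
  fine : Fine κ lam U
  normal : NormalUF κ lam U

/-- `IsSquareSeq κ o E 𝒞` unfolds to `IsCoherentSeq κ o E 𝒞 ∧ ¬∃ D, IsThread o E 𝒞 D`. -/
def IsCoherentSeq (κ : Cardinal.{0}) (o : Ordinal.{0}) (E : Set Ordinal.{0})
    (𝒞 : Ordinal.{0} → Set (Set Ordinal.{0})) : Prop :=
  ∀ α, IsSuccLimit α → α ∈ E → α < o →
    ((𝒞 α).Nonempty ∧ #(𝒞 α) < Cardinal.lift.{1} κ) ∧
      ∀ C ∈ 𝒞 α, OrdClub α C ∧ ∀ β, IsLimPt C β → β ∈ E → C ∩ Iio β ∈ 𝒞 β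

def IsThread (o : Ordinal.{0}) (E : Set Ordinal.{0}) (𝒞 : Ordinal.{0} → Set (Set Ordinal.{0}))
    (D : Set Ordinal.{0}) : Prop :=
  OrdClub o D ∧ ∀ δ, IsLimPt D δ → δ ∈ E → δ < o → D ∩ Iio δ ∈ 𝒞 δ

theorem IsCoherentSeq.mono {κ κ' : Cardinal.{0}} {o : Ordinal.{0}} {E : Set Ordinal.{0}}
    {𝒞 : Ordinal.{0} → Set (Set Ordinal.{0})} (h : IsCoherentSeq κ o E 𝒞) (hκ : κ ≤ κ') :
    IsCoherentSeq κ' o E 𝒞 := fun α hα hαE hαo =>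
  let ⟨⟨hne, hcard⟩, hclub⟩ := h α hα hαE hαo
  ⟨⟨hne, hcard.trans_le (Cardinal.lift_le.2 hκ)⟩, hclub⟩

def smallCofLimits (κ : Cardinal.{0}) (o : Ordinal.{0}) : Set Ordinal.{0} :=
  {δ | IsSuccLimit δ ∧ δ < o ∧ δ.cof < κ}

def succClosedSets (κ lam : Cardinal.{0}) : Set (Set Ordinal.{0}) :=
  {a ∈ Pk κ lam | 0 ∈ a ∧ ∀ x ∈ a, succ x ∈ a}

/-- The junk value of `Classical.epsilon` is never used: `𝒞 (sSup a)` is nonempty whenever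
`a ∈ succClosedSets κ lam` (see `clubAtSup_spec`). -/
noncomputable def clubAtSup (𝒞 : Ordinal.{0} → Set (Set Ordinal.{0})) (a : Set Ordinal.{0}) :
    Set Ordinal.{0} :=
  Classical.epsilon (· ∈ 𝒞 (sSup a))

def threadOf (κ lam : Cardinal.{0}) (U : Set (Set (Set Ordinal.{0})))
    (𝒞 : Ordinal.{0} → Set (Set Ordinal.{0})) : Set Ordinal.{0} :=
  {β | β < lam.ord ∧ {a ∈ succClosedSets κ lam | β ∈ clubAtSup 𝒞 a} ∈ U}

section Thread

variable {κ lam : Cardinal.{0}} {U : Set (Set (Set Ordinal.{0}))} {E : Set Ordinal.{0}}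
  {𝒞 : Ordinal.{0} → Set (Set Ordinal.{0})} {a : Set Ordinal.{0}} {β δ : Ordinal.{0}}

theorem bddAbove_of_mem_Pk (ha : a ∈ Pk κ lam) : BddAbove a :=
  ⟨lam.ord, fun x hx => (ha.1 x hx).le⟩

theorem sSup_mem_smallCofLimits (ha : a ∈ succClosedSets κ lam) (hcof : κ ≤ lam.ord.cof) :
    sSup a ∈ smallCofLimits κ lam.ord := by
  have hbdd := bddAbove_of_mem_Pk ha.1
  have hlim := isLimPt_sSup_of_succ_mem ⟨0, ha.2.1⟩ hbdd ha.2.2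
  refine ⟨hlim.isSuccLimit, sSup_lt_of_lt_cof ?_ ha.1.1, ?_⟩
  · rw [← Ordinal.lift_cof]
    exact ha.1.2.trans_le (Cardinal.lift_le.2 hcof)
  · exact Cardinal.lift_lt.1 (hlim.lift_cof_le_mk.trans_lt ha.1.2)

theorem succClosedSets_mem (hU : IsNormalMeasure κ lam U) (hlam : ℵ₀ ≤ lam) :
    succClosedSets κ lam ∈ U := by
  have hlim := Cardinal.isSuccLimit_ord hlam
  have hdiag := hU.normal (fun x => {a ∈ Pk κ lam | succ x ∈ a}) fun x hx =>
    hU.fine _ (hlim.succ_lt hx)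
  refine hU.isUFOn.mem_of_subset (hU.isUFOn.inter_mem hdiag (hU.fine 0 hlim.pos)) ?_
    fun a ha => ha.1
  rintro a ⟨⟨ha, hsucc⟩, -, h0⟩
  exact ⟨ha, h0, fun x hx => (hsucc x hx).2⟩

theorem clubAtSup_spec (h𝒞 : IsCoherentSeq κ lam.ord E 𝒞) (hE : smallCofLimits κ lam.ord ⊆ E)
    (hcof : κ ≤ lam.ord.cof) (ha : a ∈ succClosedSets κ lam) :
    OrdClub (sSup a) (clubAtSup 𝒞 a) ∧
      ∀ β, IsLimPt (clubAtSup 𝒞 a) β → β ∈ E → clubAtSup 𝒞 a ∩ Iio β ∈ 𝒞 β := by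
  have hsup := sSup_mem_smallCofLimits ha hcof
  obtain ⟨⟨hne, -⟩, hclub⟩ := h𝒞 _ hsup.1 (hE hsup) hsup.2.1
  exact hclub _ (Classical.epsilon_spec hne)

theorem mem_threadOf_of_isLimPt (hU : IsNormalMeasure κ lam U) (hcof : κ ≤ lam.ord.cof)
    (h𝒞 : IsCoherentSeq κ lam.ord E 𝒞) (hE : smallCofLimits κ lam.ord ⊆ E) (hδ : δ < lam.ord)
    (hlim : {a ∈ succClosedSets κ lam | IsLimPt (clubAtSup 𝒞 a) δ} ∈ U) :
    δ ∈ threadOf κ lam U 𝒞 := by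
  refine ⟨hδ, hU.isUFOn.mem_of_subset (hU.isUFOn.inter_mem hlim (hU.fine δ hδ)) ?_
    fun a ha => ha.1.1⟩
  rintro a ⟨⟨ha, haδ⟩, -, hδa⟩
  have hbdd := bddAbove_of_mem_Pk ha.1
  exact ⟨ha, (clubAtSup_spec h𝒞 hE hcof ha).1.mem_of_isLimPt
    (lt_sSup_of_succ_mem hbdd ha.2.2 hδa) haδ⟩

theorem threadOf_inter_Iio_mem (hU : IsNormalMeasure κ lam U) (hcof : κ ≤ lam.ord.cof)
    (h𝒞 : IsCoherentSeq κ lam.ord E 𝒞) (hE : smallCofLimits κ lam.ord ⊆ E) (hδ : δ < lam.ord)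
    (hδE : δ ∈ E) (hlim : {a ∈ succClosedSets κ lam | IsLimPt (clubAtSup 𝒞 a) δ} ∈ U) :
    threadOf κ lam U 𝒞 ∩ Iio δ ∈ 𝒞 δ := by
  obtain ⟨a₀, -, ha₀⟩ := hU.isUFOn.nonempty_of_mem hlim
  obtain ⟨e, he, hconst⟩ := hU.kComplete.exists_mem_of_forall_exists hU.isUFOn hlim
    (h𝒞 δ ha₀.isSuccLimit hδE hδ).1.2 (P := fun a e => clubAtSup 𝒞 a ∩ Iio δ = e)
    fun a ha => ⟨_, (clubAtSup_spec h𝒞 hE hcof ha.1).2 δ ha.2 hδE, rfl⟩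
  convert he using 1
  ext x
  constructor
  · rintro ⟨⟨-, hx⟩, hxδ⟩
    obtain ⟨a, ⟨-, rfl⟩, -, hxa⟩ := hU.isUFOn.nonempty_of_mem (hU.isUFOn.inter_mem hconst hx)
    exact ⟨hxa, hxδ⟩
  · intro hxe
    obtain ⟨a, -, rfl⟩ := hU.isUFOn.nonempty_of_mem hconst
    refine ⟨⟨hxe.2.trans hδ, hU.isUFOn.mem_of_subset hconst ?_ fun a ha => ha.1.1⟩, hxe.2⟩
    rintro b ⟨hb, hbe⟩
    exact ⟨hb.1, (hbe ▸ hxe).1⟩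

theorem setOf_isLimPt_clubAtSup_mem (hU : IsNormalMeasure κ lam U)
    (hδ : IsLimPt (threadOf κ lam U 𝒞) δ) (hδκ : δ.cof < κ) :
    {a ∈ succClosedSets κ lam | IsLimPt (clubAtSup 𝒞 a) δ} ∈ U := by
  obtain ⟨T, hTD, hT, hTlim⟩ := hδ.exists_subset_mk_le
  obtain ⟨x₀, hx₀, -⟩ := (isLimPt_iff.1 hTlim).2 0 hTlim.1
  have hall := hU.kComplete.iInter_mem
    (A := fun x : T => {a ∈ succClosedSets κ lam | x.1 ∈ clubAtSup 𝒞 a})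
    (mk_range_le.trans_lt (hT.trans_lt (Cardinal.lift_lt.2 hδκ))) fun x => (hTD x.2).2
  refine hU.isUFOn.mem_of_subset hall ?_ fun a ha => ha.1.1
  rintro a ⟨-, ha⟩
  have ha := mem_iInter.1 ha
  exact ⟨(ha ⟨x₀, hx₀⟩).1, hTlim.mono fun x hx => (ha ⟨x, hx⟩).2⟩

theorem exists_clubAtSup_inter_Ioo_nonempty_mem (hU : IsNormalMeasure κ lam U)
    (hκ : ℵ₀ < κ) (hcof : κ ≤ lam.ord.cof) (h𝒞 : IsCoherentSeq κ lam.ord E 𝒞)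
    (hE : smallCofLimits κ lam.ord ⊆ E) (hβ : β < lam.ord) :
    ∃ γ < lam.ord, β < γ ∧
      {a ∈ succClosedSets κ lam | (clubAtSup 𝒞 a ∩ Ioo β γ).Nonempty} ∈ U := by
  have hlam : ℵ₀ ≤ lam := hκ.le.trans (hcof.trans (cof_ord_le lam))
  have hB := hU.isUFOn.inter_mem (succClosedSets_mem hU hlam) (hU.fine β hβ)
  obtain ⟨γ, hγ, hγU⟩ := hU.normal.exists_mem_of_forall_exists hU.isUFOn hB
    (P := fun a γ => (clubAtSup 𝒞 a ∩ Ioo β γ).Nonempty) fun a ⟨ha, _, hβa⟩ => by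
      have hbdd := bddAbove_of_mem_Pk ha.1
      have hclub := (clubAtSup_spec h𝒞 hE hcof ha).1
      have hβsup := lt_sSup_of_succ_mem hbdd ha.2.2 hβa
      obtain ⟨η, hη, hβη⟩ :=
        hclub.2.1 _ ((sSup_mem_smallCofLimits ha hcof).1.succ_lt hβsup)
      obtain ⟨γ, hγ, hηγ⟩ := (lt_csSup_iff hbdd ⟨β, hβa⟩).1 (hclub.1 hη)
      exact ⟨γ, hγ, η, hη, succ_le_iff.1 hβη, hηγ⟩
  obtain ⟨a, -, η, -, hβη, hηγ⟩ := hU.isUFOn.nonempty_of_mem hγU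
  exact ⟨γ, hγ, hβη.trans hηγ, hU.isUFOn.mem_of_subset hγU (fun a ha => ⟨ha.1.1, ha.2⟩)
    fun a ha => ha.1.1⟩

theorem exists_mem_threadOf_gt (hU : IsNormalMeasure κ lam U) (hκ : ℵ₀ < κ)
    (hcof : κ ≤ lam.ord.cof) (h𝒞 : IsCoherentSeq κ lam.ord E 𝒞)
    (hE : smallCofLimits κ lam.ord ⊆ E) (hβ : β < lam.ord) :
    ∃ γ ∈ threadOf κ lam U 𝒞, β < γ := by
  obtain ⟨b, rfl, hb, hsup⟩ := exists_nat_seq_iSup_lt (hκ.trans_le hcof) _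
    (fun x hx => exists_clubAtSup_inter_Ioo_nonempty_mem hU hκ hcof h𝒞 hE hx) hβ
  have hall := hU.kComplete.iInter_mem
    (A := fun n =>
      {a ∈ succClosedSets κ lam | (clubAtSup 𝒞 a ∩ Ioo (b n) (b (n + 1))).Nonempty})
    ((countable_range _).le_aleph0.trans_lt (by simpa using hκ)) fun n => (hb n).2
  refine ⟨_, mem_threadOf_of_isLimPt hU hcof h𝒞 hE hsup
    (hU.isUFOn.mem_of_subset hall ?_ fun a ha => ha.1.1),
    (hb 0).1.trans_le (Ordinal.le_iSup b 1)⟩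
  rintro a ⟨-, ha⟩
  have ha := mem_iInter.1 ha
  refine ⟨(ha 0).1, isLimPt_iSup_nat (fun n => (hb n).1) fun n => ?_⟩
  obtain ⟨x, hx, hnx, hxn⟩ := (ha n).2
  exact ⟨x, hx, hnx, hxn.le⟩

theorem exists_isLimPt_threadOf_gt (hU : IsNormalMeasure κ lam U) (hκ : ℵ₀ < κ)
    (hcof : κ ≤ lam.ord.cof) (h𝒞 : IsCoherentSeq κ lam.ord E 𝒞)
    (hE : smallCofLimits κ lam.ord ⊆ E) (hβ : β < lam.ord) :
    ∃ δ < lam.ord, β < δ ∧ δ.cof < κ ∧ IsLimPt (threadOf κ lam U 𝒞) δ := by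
  obtain ⟨b, rfl, hb, hsup⟩ := exists_nat_seq_iSup_lt (hκ.trans_le hcof)
    (fun _ y => y ∈ threadOf κ lam U 𝒞) (fun x hx =>
      let ⟨y, hy, hxy⟩ := exists_mem_threadOf_gt hU hκ hcof h𝒞 hE hx
      ⟨y, hy.1, hxy, hy⟩) hβ
  exact ⟨_, hsup, (hb 0).1.trans_le (Ordinal.le_iSup b 1),
    (cof_iSup_nat_le fun n => (hb n).1).trans_lt hκ,
    isLimPt_iSup_nat (fun n => (hb n).1) fun n => ⟨_, (hb n).2, (hb n).1, le_rfl⟩⟩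

theorem mem_threadOf_and_inter_Iio_mem (hU : IsNormalMeasure κ lam U) (hκ : ℵ₀ < κ)
    (hcof : κ ≤ lam.ord.cof) (h𝒞 : IsCoherentSeq κ lam.ord E 𝒞)
    (hE : smallCofLimits κ lam.ord ⊆ E) (hβ : β < lam.ord)
    (hlim : IsLimPt (threadOf κ lam U 𝒞) β) :
    β ∈ threadOf κ lam U 𝒞 ∧ (β ∈ E → threadOf κ lam U 𝒞 ∩ Iio β ∈ 𝒞 β) := by
  obtain ⟨δ, hδ, hβδ, hδκ, hδlim⟩ := exists_isLimPt_threadOf_gt hU hκ hcof h𝒞 hE hβ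
  have hδE : δ ∈ E := hE ⟨hδlim.isSuccLimit, hδ, hδκ⟩
  have hDδ := threadOf_inter_Iio_mem hU hcof h𝒞 hE hδ hδE
    (setOf_isLimPt_clubAtSup_mem hU hδlim hδκ)
  obtain ⟨hclub, hcoh⟩ := (h𝒞 δ hδlim.isSuccLimit hδE hδ).2 _ hDδ
  have hlim' := (isLimPt_inter_Iio hβδ.le).2 hlim
  refine ⟨(hclub.mem_of_isLimPt hβδ hlim').1, fun hβE => ?_⟩
  rw [← inter_Iio_inter_Iio hβδ.le]
  exact hcoh β hlim' hβE

theorem IsNormalMeasure.exists_thread (hU : IsNormalMeasure κ lam U) (hκ : ℵ₀ < κ)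
    (hcof : κ ≤ lam.ord.cof) (h𝒞 : IsCoherentSeq κ lam.ord E 𝒞)
    (hE : smallCofLimits κ lam.ord ⊆ E) : ∃ D, IsThread lam.ord E 𝒞 D := by
  set D := threadOf κ lam U 𝒞
  have hlim : ∀ β < lam.ord, IsLimPt D β → β ∈ D ∧ (β ∈ E → D ∩ Iio β ∈ 𝒞 β) :=
    fun β hβ => mem_threadOf_and_inter_Iio_mem hU hκ hcof h𝒞 hE hβ
  have hunbdd : ∀ β < lam.ord, ∃ γ ∈ D, β ≤ γ := fun β hβ =>
    (exists_mem_threadOf_gt hU hκ hcof h𝒞 hE hβ).imp fun _ ⟨hγ, hβγ⟩ => ⟨hγ, hβγ.le⟩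
  exact ⟨D, ⟨fun β hβ => hβ.1, hunbdd, fun β hβ h0 hsup => (hlim β hβ ⟨h0, hsup⟩).1⟩,
    fun β hβlim hβE hβ => (hlim β hβ hβlim).2 hβE⟩

theorem IsNormalMeasure.not_squareE {κ' : Cardinal.{0}} (hU : IsNormalMeasure κ lam U)
    (hκ : ℵ₀ < κ) (hcof : κ ≤ lam.ord.cof) (hκ' : κ' ≤ κ)
    (hE : smallCofLimits κ lam.ord ⊆ E) : ¬ SquareE κ' lam.ord E :=
  fun ⟨_, h𝒞, hno⟩ => hno (hU.exists_thread hκ hcof (IsCoherentSeq.mono h𝒞 hκ') hE)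

end Thread

theorem supercompact_implies_square_fails_general (κ : Cardinal.{0})
    (hunc : ℵ₀ < κ) (hsc : IsSupercompact κ) :
    ∀ lam : Cardinal.{0}, κ ≤ lam → κ ≤ lam.ord.cof →
      ¬ SquareE κ lam.ord {α : Ordinal | α.cof < κ} ∧
        ¬ SquareE 2 lam.ord (Set.Iio lam.ord) := by
  intro lam hklam hcof
  obtain ⟨U, hUF, hK, hFine, hN⟩ := hsc lam hklam
  have hU : IsNormalMeasure κ lam U := ⟨hUF, hK, hFine, hN⟩
  have h2 : (2 : Cardinal) ≤ κ := (Cardinal.natCast_lt_aleph0 (n := 2)).le.trans hunc.le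
  exact ⟨hU.not_squareE hunc hcof le_rfl fun δ hδ => hδ.2.2,
    hU.not_squareE hunc hcof h2 fun δ hδ => hδ.2.1⟩

theorem supercompact_implies_square_fails (κ : Cardinal.{0})
    (hreg : κ.IsRegular) (hunc : ℵ₀ < κ) (hsc : IsSupercompact κ) :
    ∀ lam : Cardinal.{0}, κ ≤ lam → κ ≤ lam.ord.cof →
      ¬ SquareE κ lam.ord {α : Ordinal | α.cof < κ} ∧
        ¬ SquareE 2 lam.ord (Set.Iio lam.ord) :=
  supercompact_implies_square_fails_general κ hunc hsc
end
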